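/- Fix (x, ξ_1, …, ξ_k) ∈ O × E^k and let μ̄ be the associated canonical curve. Then μ̄(0) = x, μ̄^(1)(0) = ξ_1, and for every 2 ≤ i ≤ k: (1/i)·[ μ̄^(i)(0)/(i−1)! + M^1(x,ξ_1)·μ̄^(i−1)(0)/(i−2)! + ⋯ + M^{i−1}(x, ξ_1, μ̄^(2)(0)/2!, …, μ̄^(i−1)(0)/(i−1)!)·μ̄^(1)(0) ] = ξ_i. (Thus μ̄ realizes the inverse of the adapted vector bundle trivialization Φ^k: its z-coordinates z^i([μ̄, x]_k) equal ξ_i.) -/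

import Mathlib

/-- The induced connection-map components `M^i : O × E^i → L(E,E)` of a Christoffel
symbol `Γ`, defined recursively by `M^1(x,ξ₁)y = Γ x ξ₁ y` and, for `i ≥ 2`,
`M^i(x,ξ₁,…,ξ_i) = (1/i) • ( ∑_{j=1}^{i} D_j M^{i-1}(x,ξ₁,…,ξ_{i-1}) (j•ξ_j) + Γ x ξ₁ ∘ M^{i-1}(x,ξ₁,…,ξ_{i-1}) )`,
where `D_1` is the partial derivative in the `x`-argument (direction `1•ξ₁`) and, for
`2 ≤ j ≤ i`, `D_j` is the partial derivative in the `ξ_{j-1}`-argument (direction `j•ξ_j`).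
The tuple `(ξ₁,…,ξ_{i})` is encoded as a function `ξ : ℕ → E`; `M^i` only reads the
values `ξ 1, …, ξ i`. -/
noncomputable def inducedM {E : Type*} [NormedAddCommGroup E] [NormedSpace ℝ E]
    (Γ : E → (E →L[ℝ] E →L[ℝ] E)) : ℕ → E → (ℕ → E) → (E →L[ℝ] E)
  | 0, _, _ => 0
  | 1, x, ξ => Γ x (ξ 1)
  | (n + 2), x, ξ =>
      (((n + 2 : ℕ) : ℝ))⁻¹ •
        ((fderiv ℝ (fun x' => inducedM Γ (n + 1) x' ξ) x) ((1 : ℝ) • ξ 1)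
          + (∑ j ∈ Finset.Icc 2 (n + 2),
              (fderiv ℝ (fun v => inducedM Γ (n + 1) x (Function.update ξ (j - 1) v))
                  (ξ (j - 1))) ((j : ℝ) • ξ j))
          + (Γ x (ξ 1)).comp (inducedM Γ (n + 1) x ξ))

/-- The canonical curve `μ̄_k` associated to `(x, ξ₁, …, ξ_k)` and a Christoffel symbol
`Γ`: `μ̄₁ t = x + t•ξ₁`, and for `i ≥ 2`,
`μ̄_i t = μ̄_{i-1} t + (t^i/i) • ( i•ξ_i − ∑_{j=1}^{i-1} M^j(x, ξ₁, μ̄_{i-1}⁽²⁾(0)/2!, …, μ̄_{i-1}⁽ʲ⁾(0)/j!) (μ̄_{i-1}^{(i-j)}(0)/(i-j-1)!) )`. -/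
noncomputable def canonCurve {E : Type*} [NormedAddCommGroup E] [NormedSpace ℝ E]
    (Γ : E → (E →L[ℝ] E →L[ℝ] E)) (x : E) (ξ : ℕ → E) : ℕ → ℝ → E
  | 0 => fun _ => x
  | 1 => fun t => x + t • ξ 1
  | (n + 2) => fun t =>
      canonCurve Γ x ξ (n + 1) t
        + (t ^ (n + 2) / ((n + 2 : ℕ) : ℝ)) •
            ((((n + 2 : ℕ) : ℝ)) • ξ (n + 2)
              - ∑ j ∈ Finset.Icc 1 (n + 1),
                  (inducedM Γ j x
                      (fun m => ((Nat.factorial m : ℝ))⁻¹ •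
                        iteratedDeriv m (canonCurve Γ x ξ (n + 1)) 0))
                    (((Nat.factorial (n + 1 - j) : ℝ))⁻¹ •
                      iteratedDeriv (n + 2 - j) (canonCurve Γ x ξ (n + 1)) 0))

/-! Each step of the recursion adds a single monomial `t ^ i • aᵢ` to `μ̄`, so `μ̄_k` is a
polynomial curve whose `i`-th Taylor coefficient at `0` is `aᵢ` for every `k ≥ i`. The
coefficient `aᵢ` is chosen exactly so that the `i`-th `z`-coordinate equals `ξᵢ`, and since
`M^j` only reads its arguments `ξ₁, …, ξⱼ`, the Taylor data of `μ̄_k` and of `μ̄_{i-1}` enter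
that coordinate identically. -/

open scoped Nat ContDiff

theorem iteratedDeriv_pow_smul_const_zero {𝕜 F : Type*} [NontriviallyNormedField 𝕜]
    [NormedAddCommGroup F] [NormedSpace 𝕜 F] (m n : ℕ) (w : F) :
    iteratedDeriv m (fun t : 𝕜 => t ^ n • w) 0 = if m = n then (n ! : 𝕜) • w else 0 := by
  rw [iteratedDeriv_smul_const (contDiff_id.pow n).contDiffAt, iteratedDeriv_fun_pow_zero]
  split_ifs <;> simp

section
variable {E : Type*} [NormedAddCommGroup E] [NormedSpace ℝ E]
  (Γ : E → (E →L[ℝ] E →L[ℝ] E)) (x : E) (ξ : ℕ → E)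

theorem inducedM_congr {i : ℕ} {y : E} {η η' : ℕ → E} (h : Set.EqOn η η' (Set.Icc 1 i)) :
    inducedM Γ i y η = inducedM Γ i y η' := by
  induction i generalizing y η η' with
  | zero => rfl
  | succ i ih =>
    cases i with
    | zero => simp only [inducedM, h ⟨le_rfl, le_rfl⟩]
    | succ i =>
      have h' : Set.EqOn η η' (Set.Icc 1 (i + 1)) := h.mono (Set.Icc_subset_Icc_right (by omega))
      have hupdate : ∀ j v, j ≤ i + 1 →
          Set.EqOn (Function.update η j v) (Function.update η' j v) (Set.Icc 1 (i + 1)) := by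
        intro j v hj m hm
        rcases eq_or_ne m j with rfl | hne
        · simp
        · simp only [Function.update_of_ne hne, h' hm]
      have hterm : ∀ j ∈ Finset.Icc 2 (i + 2),
          fderiv ℝ (fun v => inducedM Γ (i + 1) y (Function.update η (j - 1) v)) (η (j - 1))
              ((j : ℝ) • η j)
            = fderiv ℝ (fun v => inducedM Γ (i + 1) y (Function.update η' (j - 1) v))
              (η' (j - 1)) ((j : ℝ) • η' j) := by
        intro j hj
        rw [Finset.mem_Icc] at hj
        have hj₁ : j - 1 ∈ Set.Icc 1 (i + 2) := ⟨by omega, by omega⟩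
        have hj₂ : j ∈ Set.Icc 1 (i + 2) := ⟨by omega, hj.2⟩
        simp only [funext fun v => ih (hupdate (j - 1) v (by omega)), h hj₁, h hj₂]
      simp only [inducedM, Finset.sum_congr rfl hterm, h ⟨le_rfl, by omega⟩,
        funext fun y' => ih (y := y') h', ih (y := y) h']

-- the sum `∑_{j<i} M^j(…)(…)` subtracted in the step from `μ̄_{i-1}` to `μ̄_i`, at `i = n + 2`
noncomputable def canonCurveCorrection (n : ℕ) : E :=
  ∑ j ∈ Finset.Icc 1 (n + 1),
    inducedM Γ j x (fun m => ((m ! : ℝ))⁻¹ • iteratedDeriv m (canonCurve Γ x ξ (n + 1)) 0)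
      (((n + 1 - j)! : ℝ)⁻¹ • iteratedDeriv (n + 2 - j) (canonCurve Γ x ξ (n + 1)) 0)

-- the coefficients `aᵢ`, so that `μ̄_k t = ∑_{i ≤ k} t ^ i • aᵢ`
noncomputable def canonCurveCoeff : ℕ → E
  | 0 => x
  | 1 => ξ 1
  | n + 2 => ξ (n + 2) - ((n + 2 : ℕ) : ℝ)⁻¹ • canonCurveCorrection Γ x ξ n

theorem canonCurve_succ (n : ℕ) :
    canonCurve Γ x ξ (n + 1)
      = fun t => canonCurve Γ x ξ n t + t ^ (n + 1) • canonCurveCoeff Γ x ξ (n + 1) := by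
  funext t
  cases n with
  | zero => simp [canonCurve, canonCurveCoeff]
  | succ n =>
    have hn : ((n + 2 : ℕ) : ℝ) ≠ 0 := by positivity
    simp only [canonCurve, canonCurveCoeff, canonCurveCorrection, smul_sub, smul_smul]
    congr 2
    field_simp

theorem contDiff_canonCurve (n : ℕ) : ContDiff ℝ ω (canonCurve Γ x ξ n) := by
  induction n with
  | zero => exact contDiff_const
  | succ n ih =>
    rw [canonCurve_succ]
    fun_prop

theorem iteratedDeriv_canonCurve_zero (n m : ℕ) :
    iteratedDeriv m (canonCurve Γ x ξ n) 0
      = if m ≤ n then (m ! : ℝ) • canonCurveCoeff Γ x ξ m else 0 := by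
  induction n with
  | zero =>
    have hconst : canonCurve Γ x ξ 0 = fun t : ℝ => t ^ 0 • x := by funext; simp [canonCurve]
    rw [hconst, iteratedDeriv_pow_smul_const_zero]
    simp only [Nat.le_zero]
    split_ifs with hm
    · simp [hm, canonCurveCoeff]
    · rfl
  | succ n ih =>
    have hmonomial : ContDiff ℝ ω fun t : ℝ => t ^ (n + 1) • canonCurveCoeff Γ x ξ (n + 1) := by
      fun_prop
    rw [canonCurve_succ,
      iteratedDeriv_fun_add ((contDiff_canonCurve Γ x ξ n).contDiffAt.of_le le_top)
        (hmonomial.contDiffAt.of_le le_top), ih, iteratedDeriv_pow_smul_const_zero]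
    split_ifs <;> first | omega | simp_all

theorem iteratedDeriv_canonCurve_zero_of_le {m n : ℕ} (h : m ≤ n) :
    iteratedDeriv m (canonCurve Γ x ξ n) 0 = (m ! : ℝ) • canonCurveCoeff Γ x ξ m := by
  rw [iteratedDeriv_canonCurve_zero, if_pos h]

theorem iteratedDeriv_canonCurve_zero_of_le_of_le {m n K : ℕ} (hm : m ≤ n) (hn : n ≤ K) :
    iteratedDeriv m (canonCurve Γ x ξ K) 0 = iteratedDeriv m (canonCurve Γ x ξ n) 0 := by
  rw [iteratedDeriv_canonCurve_zero_of_le Γ x ξ hm,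
    iteratedDeriv_canonCurve_zero_of_le Γ x ξ (hm.trans hn)]

theorem sum_inducedM_canonCurve_eq_canonCurveCorrection {n K : ℕ} (h : n + 1 ≤ K) :
    ∑ j ∈ Finset.Icc 1 (n + 1),
        inducedM Γ j x (fun m => ((m ! : ℝ))⁻¹ • iteratedDeriv m (canonCurve Γ x ξ K) 0)
          (((n + 2 - j - 1)! : ℝ)⁻¹ • iteratedDeriv (n + 2 - j) (canonCurve Γ x ξ K) 0)
      = canonCurveCorrection Γ x ξ n := by
  refine Finset.sum_congr rfl fun j hj => ?_
  rw [Finset.mem_Icc] at hj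
  have hν : Set.EqOn (fun m => ((m ! : ℝ))⁻¹ • iteratedDeriv m (canonCurve Γ x ξ K) 0)
      (fun m => ((m ! : ℝ))⁻¹ • iteratedDeriv m (canonCurve Γ x ξ (n + 1)) 0) (Set.Icc 1 j) :=
    fun m hm => by
      simp only [iteratedDeriv_canonCurve_zero_of_le_of_le Γ x ξ (hm.2.trans hj.2) h]
  rw [inducedM_congr Γ hν,
    iteratedDeriv_canonCurve_zero_of_le_of_le Γ x ξ (by omega : n + 2 - j ≤ n + 1) h,
    show n + 2 - j - 1 = n + 1 - j by omega]
end

theorem canonCurve_realizes_trivialization_general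
    {E : Type*} [NormedAddCommGroup E] [NormedSpace ℝ E]
    (Γ : E → (E →L[ℝ] E →L[ℝ] E))
    (k : ℕ) (hk : 1 ≤ k) (x : E) (ξ : ℕ → E) :
    let μ : ℝ → E := canonCurve Γ x ξ k
    let ν : ℕ → E := fun m => ((Nat.factorial m : ℝ))⁻¹ • iteratedDeriv m μ 0
    (μ 0 = x) ∧
    (deriv μ 0 = ξ 1) ∧
    (∀ i : ℕ, 2 ≤ i → i ≤ k →
      (i : ℝ)⁻¹ •
          (((Nat.factorial (i - 1) : ℝ))⁻¹ • iteratedDeriv i μ 0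
            + ∑ j ∈ Finset.Icc 1 (i - 1),
                inducedM Γ j x ν
                  (((Nat.factorial (i - j - 1) : ℝ))⁻¹ • iteratedDeriv (i - j) μ 0))
        = ξ i) := by
  intro μ ν
  have hμ : ∀ m ≤ k, iteratedDeriv m μ 0 = (m ! : ℝ) • canonCurveCoeff Γ x ξ m :=
    fun m hm => iteratedDeriv_canonCurve_zero_of_le Γ x ξ hm
  refine ⟨?_, ?_, fun i hi hik => ?_⟩
  · simpa [canonCurveCoeff] using hμ 0 k.zero_le
  · simpa [canonCurveCoeff] using hμ 1 hk
  · obtain ⟨n, rfl⟩ : ∃ n, i = n + 2 := ⟨i - 2, by omega⟩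
    rw [show n + 2 - 1 = n + 1 from rfl,
      sum_inducedM_canonCurve_eq_canonCurveCorrection Γ x ξ (by omega : n + 1 ≤ k),
      hμ _ hik, canonCurveCoeff, Nat.factorial_succ (n + 1)]
    have hn : ((n + 2 : ℕ) : ℝ) ≠ 0 := by positivity
    have hfac : ((n + 1)! : ℝ) ≠ 0 := by positivity
    match_scalars <;> field_simp <;> ring

/-- **The canonical curve inverts the adapted trivialization.**
For the canonical curve `μ̄` associated to `(x, ξ₁, …, ξ_k)`: `μ̄ 0 = x`, `μ̄'(0) = ξ₁`,
and for every `2 ≤ i ≤ k` the `z`-coordinates of the adapted trivialization satisfy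
`(1/i)[ μ̄^(i)(0)/(i−1)! + M^1(x,ξ₁) μ̄^(i−1)(0)/(i−2)! + ⋯ + M^{i−1}(x,ξ₁,μ̄⁽²⁾(0)/2!,…,μ̄^(i−1)(0)/(i−1)!) μ̄^(1)(0) ] = ξ_i`. -/
theorem canonCurve_realizes_trivialization
    {E : Type*} [NormedAddCommGroup E] [NormedSpace ℝ E]
    (O : Set E) (hO : IsOpen O)
    (Γ : E → (E →L[ℝ] E →L[ℝ] E)) (hΓ : ContDiffOn ℝ (⊤ : ℕ∞) Γ O)
    (k : ℕ) (hk : 1 ≤ k) (x : E) (hx : x ∈ O) (ξ : ℕ → E) :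
    let μ : ℝ → E := canonCurve Γ x ξ k
    let ν : ℕ → E := fun m => ((Nat.factorial m : ℝ))⁻¹ • iteratedDeriv m μ 0
    (μ 0 = x) ∧
    (deriv μ 0 = ξ 1) ∧
    (∀ i : ℕ, 2 ≤ i → i ≤ k →
      (i : ℝ)⁻¹ •
          (((Nat.factorial (i - 1) : ℝ))⁻¹ • iteratedDeriv i μ 0
            + ∑ j ∈ Finset.Icc 1 (i - 1),
                inducedM Γ j x ν
                  (((Nat.factorial (i - j - 1) : ℝ))⁻¹ • iteratedDeriv (i - j) μ 0))
        = ξ i) :=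
  canonCurve_realizes_trivialization_general Γ k hk x ξ
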